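/- For an integer k ≥ 2 and complex s, define G^{±}(s) := [Γ((k+1+s)/2)·Γ((k+s)/2) / (Γ((k−s)/2)·Γ((k−1−s)/2))] · [ Γ((2+s)/2)/Γ((1−s)/2) ∓ i·Γ((1+s)/2)/Γ(−s/2) ], where Γ is the complex Gamma function. Then for every real t, G^{±}(−1/2 + it) = ∓ i · 2^{1/2 − 3it} · Γ(1/2 + it) · exp(±(iπ/4)(1 + 2it)) · Γ(k − 1/2 + it) / ( √π · Γ(k − 1/2 − it) ). -/
import Mathlib


/-- The kernel `G^{±}(s)` of the GL(3) Voronoi summation formula for weight `k`;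
`ε = 1` corresponds to `G^{+}` and `ε = -1` to `G^{-}` (so the bracket carries `∓ i = -ε i`). -/
noncomputable def voronoiKernel (ε : ℂ) (k : ℕ) (s : ℂ) : ℂ :=
  (Complex.Gamma (((k : ℂ) + 1 + s) / 2) * Complex.Gamma (((k : ℂ) + s) / 2) /
      (Complex.Gamma (((k : ℂ) - s) / 2) * Complex.Gamma (((k : ℂ) - 1 - s) / 2))) *
    (Complex.Gamma ((2 + s) / 2) / Complex.Gamma ((1 - s) / 2) -
      ε * Complex.I * (Complex.Gamma ((1 + s) / 2) / Complex.Gamma (-s / 2)))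

/-- The closed evaluation of `G^{±}(-1/2 + it)` via the reflection and duplication
formulas for the Gamma function. -/
theorem voronoiKernel_at_half (k : ℕ) (hk : 2 ≤ k) (t : ℝ) (ε : ℂ)
    (hε : ε = 1 ∨ ε = -1) :
    voronoiKernel ε k (-(1 / 2) + Complex.I * t) =
      -ε * Complex.I *
          (2 : ℂ) ^ ((1 : ℂ) / 2 - 3 * Complex.I * t) *
          Complex.Gamma (1 / 2 + Complex.I * t) *
          Complex.exp (ε * (Complex.I * Real.pi / 4) * (1 + 2 * Complex.I * t)) *
          Complex.Gamma ((k : ℂ) - 1 / 2 + Complex.I * t) /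
        (((Real.sqrt Real.pi : ℝ) : ℂ) * Complex.Gamma ((k : ℂ) - 1 / 2 - Complex.I * t)) := by
  have hkR : (2 : ℝ) ≤ (k : ℝ) := by exact_mod_cast hk
  set s : ℂ := -(1 / 2) + Complex.I * t with hs
  -- helper for real parts
  have hre : ∀ a b : ℝ, ((a : ℂ) + (b : ℂ) * Complex.I).re = a := by intro a b; simp
  -- nonvanishing of the relevant Gamma values
  have hA : Complex.Gamma ((1 + s) / 2) ≠ 0 := by
    apply Complex.Gamma_ne_zero_of_re_pos
    rw [show (1 + s) / 2 = ((1/4 : ℝ) : ℂ) + ((t/2 : ℝ)) * Complex.I by rw [hs]; push_cast; ring,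
      hre]
    norm_num
  have hB : Complex.Gamma ((2 + s) / 2) ≠ 0 := by
    apply Complex.Gamma_ne_zero_of_re_pos
    rw [show (2 + s) / 2 = ((3/4 : ℝ) : ℂ) + ((t/2 : ℝ)) * Complex.I by rw [hs]; push_cast; ring,
      hre]
    norm_num
  have hA' : Complex.Gamma (-s / 2) ≠ 0 := by
    apply Complex.Gamma_ne_zero_of_re_pos
    rw [show -s / 2 = ((1/4 : ℝ) : ℂ) + ((-t/2 : ℝ)) * Complex.I by rw [hs]; push_cast; ring,
      hre]
    norm_num
  have hB' : Complex.Gamma ((1 - s) / 2) ≠ 0 := by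
    apply Complex.Gamma_ne_zero_of_re_pos
    rw [show (1 - s) / 2 = ((3/4 : ℝ) : ℂ) + ((-t/2 : ℝ)) * Complex.I by rw [hs]; push_cast; ring,
      hre]
    norm_num
  have hE' : Complex.Gamma ((k : ℂ) - 1 / 2 - Complex.I * t) ≠ 0 := by
    apply Complex.Gamma_ne_zero_of_re_pos
    rw [show (k : ℂ) - 1/2 - Complex.I * t
        = (((k:ℝ) - 1/2 : ℝ) : ℂ) + ((-t : ℝ)) * Complex.I by push_cast; ring, hre]
    linarith
  have hsqrt : ((Real.sqrt Real.pi : ℝ) : ℂ) ≠ 0 :=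
    Complex.ofReal_ne_zero.mpr (Real.sqrt_ne_zero'.mpr Real.pi_pos)
  have hpi : (Real.pi : ℂ) ≠ 0 := by
    exact_mod_cast Real.pi_ne_zero
  -- duplication formulas
  have dup1 : Complex.Gamma (((k:ℂ) + s) / 2) * Complex.Gamma (((k:ℂ) + 1 + s) / 2)
      = Complex.Gamma ((k:ℂ) - 1/2 + Complex.I * t) * (2:ℂ) ^ ((3:ℂ)/2 - k - Complex.I * t)
        * ((Real.sqrt Real.pi : ℝ) : ℂ) := by
    have h := Complex.Gamma_mul_Gamma_add_half (((k:ℂ) + s) / 2)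
    rw [show ((k:ℂ) + s) / 2 + 1/2 = ((k:ℂ) + 1 + s) / 2 by ring,
      show 1 - 2 * (((k:ℂ) + s) / 2) = (3:ℂ)/2 - k - Complex.I * t by rw [hs]; ring,
      show 2 * (((k:ℂ) + s) / 2) = (k:ℂ) - 1/2 + Complex.I * t by rw [hs]; ring] at h
    exact h
  have dup2 : Complex.Gamma (((k:ℂ) - 1 - s) / 2) * Complex.Gamma (((k:ℂ) - s) / 2)
      = Complex.Gamma ((k:ℂ) - 1/2 - Complex.I * t) * (2:ℂ) ^ ((3:ℂ)/2 - k + Complex.I * t)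
        * ((Real.sqrt Real.pi : ℝ) : ℂ) := by
    have h := Complex.Gamma_mul_Gamma_add_half (((k:ℂ) - 1 - s) / 2)
    rw [show ((k:ℂ) - 1 - s) / 2 + 1/2 = ((k:ℂ) - s) / 2 by ring,
      show 1 - 2 * (((k:ℂ) - 1 - s) / 2) = (3:ℂ)/2 - k + Complex.I * t by rw [hs]; ring,
      show 2 * (((k:ℂ) - 1 - s) / 2) = (k:ℂ) - 1/2 - Complex.I * t by rw [hs]; ring] at h
    exact h
  have dup3 : Complex.Gamma ((1 + s) / 2) * Complex.Gamma ((2 + s) / 2)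
      = Complex.Gamma (1/2 + Complex.I * t) * (2:ℂ) ^ ((1:ℂ)/2 - Complex.I * t)
        * ((Real.sqrt Real.pi : ℝ) : ℂ) := by
    have h := Complex.Gamma_mul_Gamma_add_half ((1 + s) / 2)
    rw [show (1 + s) / 2 + 1/2 = (2 + s) / 2 by ring,
      show 1 - 2 * ((1 + s) / 2) = (1:ℂ)/2 - Complex.I * t by rw [hs]; ring,
      show 2 * ((1 + s) / 2) = 1/2 + Complex.I * t by rw [hs]; ring] at h
    exact h
  -- reflection formulas
  have refl1 : Complex.Gamma ((2 + s) / 2) * Complex.Gamma (-s / 2)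
      = (Real.pi : ℂ) / Complex.sin ((Real.pi : ℂ) * ((2 + s) / 2)) := by
    have h := Complex.Gamma_mul_Gamma_one_sub ((2 + s) / 2)
    rw [show 1 - (2 + s) / 2 = -s / 2 by ring] at h
    exact h
  have refl2 : Complex.Gamma ((1 + s) / 2) * Complex.Gamma ((1 - s) / 2)
      = (Real.pi : ℂ) / Complex.sin ((Real.pi : ℂ) * ((1 + s) / 2)) := by
    have h := Complex.Gamma_mul_Gamma_one_sub ((1 + s) / 2)
    rw [show 1 - (1 + s) / 2 = (1 - s) / 2 by ring] at h
    exact h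
  -- the sines are nonzero
  have hs1 : Complex.sin ((Real.pi : ℂ) * ((2 + s) / 2)) ≠ 0 := by
    intro h
    rw [h, div_zero] at refl1
    exact mul_ne_zero hB hA' refl1
  have hs2 : Complex.sin ((Real.pi : ℂ) * ((1 + s) / 2)) ≠ 0 := by
    intro h
    rw [h, div_zero] at refl2
    exact mul_ne_zero hA hB' refl2
  -- solve for the "negative argument" Gammas
  have hA'v : Complex.Gamma (-s / 2)
      = (Real.pi : ℂ) / (Complex.sin ((Real.pi : ℂ) * ((2 + s) / 2)) * Complex.Gamma ((2 + s) / 2)) := by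
    rw [eq_div_iff (mul_ne_zero hs1 hB)]
    rw [eq_div_iff hs1] at refl1
    linear_combination refl1
  have hB'v : Complex.Gamma ((1 - s) / 2)
      = (Real.pi : ℂ) / (Complex.sin ((Real.pi : ℂ) * ((1 + s) / 2)) * Complex.Gamma ((1 + s) / 2)) := by
    rw [eq_div_iff (mul_ne_zero hs2 hA)]
    rw [eq_div_iff hs2] at refl2
    linear_combination refl2
  -- the trigonometric identity
  have trig : Complex.sin ((Real.pi : ℂ) * ((1 + s) / 2))
        - ε * Complex.I * Complex.sin ((Real.pi : ℂ) * ((2 + s) / 2))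
      = -(ε * Complex.I) * Complex.exp (ε * (Complex.I * Real.pi / 4) * (1 + 2 * Complex.I * t)) := by
    have harg : (Real.pi : ℂ) * ((2 + s) / 2)
        = (Real.pi : ℂ) * ((1 + s) / 2) + (Real.pi : ℂ) / 2 := by rw [hs]; ring
    rcases hε with h | h <;> subst h
    · rw [harg, Complex.sin_add, Complex.sin_pi_div_two, Complex.cos_pi_div_two,
        show (1:ℂ) * (Complex.I * Real.pi / 4) * (1 + 2 * Complex.I * t)
          = ((Real.pi : ℂ) * ((1 + s) / 2)) * Complex.I by rw [hs]; ring,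
        Complex.exp_mul_I]
      linear_combination Complex.sin ((Real.pi : ℂ) * ((1 + s) / 2)) * Complex.I_sq
    · rw [harg, Complex.sin_add, Complex.sin_pi_div_two, Complex.cos_pi_div_two,
        show (-1:ℂ) * (Complex.I * Real.pi / 4) * (1 + 2 * Complex.I * t)
          = (-((Real.pi : ℂ) * ((1 + s) / 2))) * Complex.I by rw [hs]; ring,
        Complex.exp_mul_I, Complex.cos_neg, Complex.sin_neg]
      linear_combination Complex.sin ((Real.pi : ℂ) * ((1 + s) / 2)) * Complex.I_sq
  -- power arithmetic
  have hp : (2:ℂ) ^ ((1:ℂ)/2 - 3 * Complex.I * t) * (2:ℂ) ^ ((3:ℂ)/2 - k + Complex.I * t)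
      = (2:ℂ) ^ ((3:ℂ)/2 - k - Complex.I * t) * (2:ℂ) ^ ((1:ℂ)/2 - Complex.I * t) := by
    rw [← Complex.cpow_add _ _ two_ne_zero, ← Complex.cpow_add _ _ two_ne_zero]
    congr 1
    ring
  have hp2 : (2:ℂ) ^ ((3:ℂ)/2 - k + Complex.I * t) ≠ 0 := by
    simp [Complex.cpow_eq_zero_iff]
  have hpp : ((Real.sqrt Real.pi : ℝ) : ℂ) * ((Real.sqrt Real.pi : ℝ) : ℂ) = (Real.pi : ℂ) := by
    rw [← Complex.ofReal_mul, Real.mul_self_sqrt Real.pi_pos.le]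
  have key : Complex.Gamma ((2 + s) / 2) / Complex.Gamma ((1 - s) / 2)
        - ε * Complex.I * (Complex.Gamma ((1 + s) / 2) / Complex.Gamma (-s / 2))
      = Complex.Gamma (1/2 + Complex.I * t) * (2:ℂ) ^ ((1:ℂ)/2 - Complex.I * t)
          * ((Real.sqrt Real.pi : ℝ) : ℂ) * (-(ε * Complex.I)
          * Complex.exp (ε * (Complex.I * Real.pi / 4) * (1 + 2 * Complex.I * t))) / Real.pi := by
    rw [hA'v, hB'v, div_div_eq_mul_div, div_div_eq_mul_div]
    calc Complex.Gamma ((2 + s) / 2) * (Complex.sin ((Real.pi : ℂ) * ((1 + s) / 2))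
            * Complex.Gamma ((1 + s) / 2)) / Real.pi
          - ε * Complex.I * (Complex.Gamma ((1 + s) / 2)
            * (Complex.sin ((Real.pi : ℂ) * ((2 + s) / 2)) * Complex.Gamma ((2 + s) / 2)) / Real.pi)
        = (Complex.Gamma ((1 + s) / 2) * Complex.Gamma ((2 + s) / 2))
            * (Complex.sin ((Real.pi : ℂ) * ((1 + s) / 2))
              - ε * Complex.I * Complex.sin ((Real.pi : ℂ) * ((2 + s) / 2))) / Real.pi := by ring
      _ = (Complex.Gamma ((1 + s) / 2) * Complex.Gamma ((2 + s) / 2)) * (-(ε * Complex.I)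
            * Complex.exp (ε * (Complex.I * Real.pi / 4) * (1 + 2 * Complex.I * t))) / Real.pi := by
          rw [trig]
      _ = _ := by rw [dup3]
  rw [voronoiKernel,
    show Complex.Gamma (((k:ℂ) + 1 + s) / 2) * Complex.Gamma (((k:ℂ) + s) / 2)
      = Complex.Gamma ((k:ℂ) - 1/2 + Complex.I * t) * (2:ℂ) ^ ((3:ℂ)/2 - k - Complex.I * t)
        * ((Real.sqrt Real.pi : ℝ) : ℂ) from (mul_comm _ _).trans dup1,
    show Complex.Gamma (((k:ℂ) - s) / 2) * Complex.Gamma (((k:ℂ) - 1 - s) / 2)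
      = Complex.Gamma ((k:ℂ) - 1/2 - Complex.I * t) * (2:ℂ) ^ ((3:ℂ)/2 - k + Complex.I * t)
        * ((Real.sqrt Real.pi : ℝ) : ℂ) from (mul_comm _ _).trans dup2,
    key]
  rw [div_mul_div_comm, div_eq_div_iff
    (mul_ne_zero (mul_ne_zero (mul_ne_zero hE' hp2) hsqrt) hpi) (mul_ne_zero hsqrt hE')]
  linear_combination (-(ε * Complex.I)
      * Complex.exp (ε * (Complex.I * Real.pi / 4) * (1 + 2 * Complex.I * t))
      * Complex.Gamma ((k:ℂ) - 1/2 + Complex.I * t) * Complex.Gamma (1/2 + Complex.I * t)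
      * Complex.Gamma ((k:ℂ) - 1/2 - Complex.I * t) * ((Real.sqrt Real.pi : ℝ) : ℂ))
    * ((2:ℂ) ^ ((3:ℂ)/2 - k - Complex.I * t) * (2:ℂ) ^ ((1:ℂ)/2 - Complex.I * t) * hpp
      - (Real.pi : ℂ) * hp)
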